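/- arXiv:2110.02867 — 2 statements merged into one kernel-verified Lean document; each statement's English description precedes it below -/
import Mathlib

section
/- At the fixed point O₋ = (θ*, 0) with θ* = arctan √(m₁/m₂), the Jacobian of the system θ' = sin α sin 2θ, α' = -m sin α sin 2θ + 2 cos α (m₁ cos²θ - m₂ sin²θ) has trace -m·sin 2θ* and determinant 2 sin 2θ* (m₁ + m₂) sin 2θ*; in particular both eigenvalues have negative real part, so O₋ is a sink. -/
/-!
Linearising at `(θ*, 0)`, where `sin α = 0` and `cos α = 1`, gives the Jacobian
`!![0, s; -2 (m₁ + m₂) s, -m s]` with `s = sin 2θ* > 0`. Its trace is negative and its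
determinant positive, and a real `2 × 2` matrix with these signs has both roots of its
characteristic polynomial `μ² - (tr A) μ + det A` in the open left half-plane.
-/

open Real

theorem Complex.re_neg_of_sq_sub_mul_add_eq_zero {t d : ℝ} (ht : t < 0) (hd : 0 < d) {z : ℂ}
    (hz : z ^ 2 - t * z + d = 0) : z.re < 0 := by
  have hre : z.re ^ 2 - z.im ^ 2 - t * z.re + d = 0 := by
    simpa [sq, Complex.mul_re] using congrArg Complex.re hz
  have him : z.im * (2 * z.re - t) = 0 := by
    have := congrArg Complex.im hz
    simp only [sq, Complex.sub_im, Complex.add_im, Complex.mul_im, Complex.ofReal_re,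
      Complex.ofReal_im, Complex.zero_im] at this
    linear_combination this
  rcases mul_eq_zero.mp him with hreal | hline
  · -- a real root: `z.re² - t z.re + d > 0` whenever `z.re ≥ 0`
    rw [hreal] at hre
    nlinarith
  · -- a non-real root sits on the line `z.re = t / 2`
    linarith

theorem Matrix.sq_sub_trace_mul_add_det_eq_zero_of_mem_spectrum {K : Type*} [Field K]
    (A : Matrix (Fin 2) (Fin 2) K) {μ : K} (hμ : μ ∈ spectrum K A) :
    μ ^ 2 - A.trace * μ + A.det = 0 := by
  simpa [Matrix.charpoly_fin_two] using (Matrix.mem_spectrum_iff_isRoot_charpoly.mp hμ).eq_zero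

theorem Matrix.re_neg_of_mem_spectrum_of_trace_neg_of_det_pos (A : Matrix (Fin 2) (Fin 2) ℝ)
    (htr : A.trace < 0) (hdet : 0 < A.det) {μ : ℂ}
    (hμ : μ ∈ spectrum ℂ (A.map Complex.ofReal)) : μ.re < 0 := by
  refine Complex.re_neg_of_sq_sub_mul_add_eq_zero htr hdet ?_
  have := (A.map Complex.ofReal).sq_sub_trace_mul_add_det_eq_zero_of_mem_spectrum hμ
  simpa [Matrix.trace_fin_two, Matrix.det_fin_two] using this

theorem Real.sin_two_mul_arctan_pos {x : ℝ} (hx : 0 < x) : 0 < sin (2 * arctan x) := by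
  rw [sin_two_mul]
  have := sin_arctan_pos.mpr hx
  have := cos_arctan_pos x
  positivity

theorem Real.hasDerivAt_mul_cos_sq_sub_mul_sin_sq (a b θ : ℝ) :
    HasDerivAt (fun θ => a * cos θ ^ 2 - b * sin θ ^ 2) (-(a + b) * sin (2 * θ)) θ := by
  refine ((((hasDerivAt_cos θ).pow 2).const_mul a).sub
    (((hasDerivAt_sin θ).pow 2).const_mul b)).congr_deriv ?_
  rw [sin_two_mul]
  ring

theorem Real.hasDerivAt_mul_sin_mul_add_mul_cos_mul_zero (a b c d : ℝ) :
    HasDerivAt (fun α => a * sin α * b + c * cos α * d) (a * b) 0 :=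
  ((((hasDerivAt_sin 0).const_mul a).mul_const b).add
    (((hasDerivAt_cos 0).const_mul c).mul_const d)).congr_deriv (by simp)

/-- At the fixed point `O₋ = (θ*, 0)` with `θ* = arctan √(m₁/m₂)`, the Jacobian matrix `A`
of the system (formed by the partial derivatives of the right hand side) has
trace `-m sin 2θ*` and determinant `2 sin 2θ* (m₁+m₂) sin 2θ*`; every (complex)
eigenvalue of `A` has negative real part, so `O₋` is a sink. -/
theorem sink_at_O_minus (g m₁ m₂ : ℝ) (hg : 0 < g) (hm₁ : 0 < m₁) (hm₂ : 0 < m₂)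
    (m : ℝ) (hm : m = m₁ + m₂ + g / 2)
    (θstar : ℝ) (hθstar : θstar = Real.arctan (Real.sqrt (m₁ / m₂)))
    (f₁ f₂ : ℝ → ℝ → ℝ)
    (hf₁ : ∀ θ α, f₁ θ α = Real.sin α * Real.sin (2 * θ))
    (hf₂ : ∀ θ α, f₂ θ α = -m * Real.sin α * Real.sin (2 * θ) +
      2 * Real.cos α * (m₁ * Real.cos θ ^ 2 - m₂ * Real.sin θ ^ 2)) :
    ∃ A : Matrix (Fin 2) (Fin 2) ℝ,
      A 0 0 = deriv (fun θ => f₁ θ 0) θstar ∧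
      A 0 1 = deriv (fun α => f₁ θstar α) 0 ∧
      A 1 0 = deriv (fun θ => f₂ θ 0) θstar ∧
      A 1 1 = deriv (fun α => f₂ θstar α) 0 ∧
      A.trace = -m * Real.sin (2 * θstar) ∧
      A.det = 2 * Real.sin (2 * θstar) * (m₁ + m₂) * Real.sin (2 * θstar) ∧
      ∀ μ ∈ spectrum ℂ (A.map (Complex.ofReal)), μ.re < 0 := by
  have hs : 0 < sin (2 * θstar) :=
    hθstar ▸ sin_two_mul_arctan_pos (sqrt_pos.mpr (div_pos hm₁ hm₂))
  set s := sin (2 * θstar)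
  have hm_pos : 0 < m := by rw [hm]; positivity
  have htr : (!![0, s; -2 * (m₁ + m₂) * s, -m * s]).trace = -m * s := by
    rw [Matrix.trace_fin_two_of, zero_add]
  have hdet : (!![0, s; -2 * (m₁ + m₂) * s, -m * s]).det = 2 * s * (m₁ + m₂) * s := by
    rw [Matrix.det_fin_two_of]
    ring
  refine ⟨!![0, s; -2 * (m₁ + m₂) * s, -m * s], ?_, ?_, ?_, ?_, htr, hdet, fun μ hμ =>
    Matrix.re_neg_of_mem_spectrum_of_trace_neg_of_det_pos _ ?_ ?_ hμ⟩
  · simp [hf₁]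
  · simp [hf₁, s]
  · simp [hf₂, (hasDerivAt_mul_cos_sq_sub_mul_sin_sq m₁ m₂ θstar).deriv, s]
    ring
  · simp only [hf₂, (hasDerivAt_mul_sin_mul_add_mul_cos_mul_zero _ _ _ _).deriv]
    rfl
  · rw [htr]
    nlinarith
  · rw [hdet]
    positivity
end

section
/- Let γ(t) = (θ(t), α(t)) be a solution of θ' = sin α sin 2θ, α' = -m sin α sin 2θ + 2 cos α (m₁ cos²θ - m₂ sin²θ) with 0 < θ(t) < π/2 for all t, and suppose sin α(t₀) = 0 and θ(t₀) < θ* = arctan √(m₁/m₂) at some time t₀ where γ(t₀) is not a fixed point. Then θ'(t₀) = 0 and θ''(t₀) > 0, i.e., θ has a strict local minimum at t₀. -/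
/-!
At a time where `sin α = 0` the first equation gives `θ' = 0`, and differentiating it,
`θ'' = cos α · α' · sin 2θ = 2 cos² α (m₁ cos² θ - m₂ sin² θ) sin 2θ`. Here `cos² α = 1`,
`sin 2θ > 0` on `(0, π/2)`, and `θ < arctan √(m₁/m₂)` says exactly `tan² θ < m₁/m₂`,
i.e. `m₁ cos² θ - m₂ sin² θ > 0`.
-/

open Real

lemma mul_sin_sq_lt_mul_cos_sq_of_lt_arctan_sqrt {a b x : ℝ} (hb : 0 < b)
    (hx : x ∈ Set.Ioo 0 (π / 2)) (hlt : x < arctan (√(a / b))) :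
    b * sin x ^ 2 < a * cos x ^ 2 := by
  obtain ⟨hx₀, hx₁⟩ := hx
  have hcos : 0 < cos x := cos_pos_of_mem_Ioo ⟨by linarith [pi_pos], hx₁⟩
  have htan : tan x < √(a / b) := by
    rwa [← arctan_tan (by linarith [pi_pos]) hx₁, arctan_lt_arctan_iff] at hlt
  rw [lt_sqrt (tan_pos_of_pos_of_lt_pi_div_two hx₀ hx₁).le, tan_eq_sin_div_cos, div_pow,
    div_lt_div_iff₀ (by positivity) hb] at htan
  linarith

lemma hasDerivAt_sin_comp_mul_of_sin_eq_zero {f v : ℝ → ℝ} {f' v' t : ℝ}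
    (hf : HasDerivAt f f' t) (hv : HasDerivAt v v' t) (h : sin (f t) = 0) :
    HasDerivAt (fun s => sin (f s) * v s) (cos (f t) * f' * v t) t := by
  simpa only [h, zero_mul, add_zero] using hf.sin.fun_mul hv

theorem theta_local_min_general (m₁ m₂ : ℝ) (hm₂ : 0 < m₂)
    (m : ℝ)
    (θ α : ℝ → ℝ)
    (hθ : ∀ t, HasDerivAt θ (Real.sin (α t) * Real.sin (2 * θ t)) t)
    (hα : ∀ t, HasDerivAt α
      (-m * Real.sin (α t) * Real.sin (2 * θ t) +
        2 * Real.cos (α t) * (m₁ * Real.cos (θ t) ^ 2 - m₂ * Real.sin (θ t) ^ 2)) t)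
    (hrange : ∀ t, θ t ∈ Set.Ioo 0 (π / 2))
    (t₀ : ℝ) (hsin : Real.sin (α t₀) = 0)
    (hlt : θ t₀ < Real.arctan (Real.sqrt (m₁ / m₂))) :
    deriv θ t₀ = 0 ∧ 0 < deriv (deriv θ) t₀ := by
  have hderiv : deriv θ = fun t => sin (α t) * sin (2 * θ t) := funext fun t => (hθ t).deriv
  set K := m₁ * cos (θ t₀) ^ 2 - m₂ * sin (θ t₀) ^ 2
  have hK : 0 < K := by
    linarith [mul_sin_sq_lt_mul_cos_sq_of_lt_arctan_sqrt hm₂ (hrange t₀) hlt]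
  have hS : 0 < sin (2 * θ t₀) := by
    obtain ⟨h₀, h₁⟩ := hrange t₀
    exact sin_pos_of_pos_of_lt_pi (by linarith) (by linarith)
  have hcos : cos (α t₀) ^ 2 = 1 := by nlinarith [sin_sq_add_cos_sq (α t₀)]
  have hθ'' : HasDerivAt (deriv θ) (2 * K * sin (2 * θ t₀)) t₀ := by
    rw [hderiv]
    convert hasDerivAt_sin_comp_mul_of_sin_eq_zero (hα t₀) ((hθ t₀).const_mul 2).sin hsin using 1
    rw [hsin]
    linear_combination -2 * K * sin (2 * θ t₀) * hcos
  exact ⟨by simp [hderiv, hsin], hθ''.deriv ▸ mul_pos (mul_pos two_pos hK) hS⟩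

/-- If a non-fixed solution of the system has `sin α(t₀) = 0` at a point with
`0 < θ(t₀) < θ* = arctan √(m₁/m₂)`, then `θ` has a strict local minimum there:
`θ'(t₀) = 0` and `θ''(t₀) > 0`. -/
theorem theta_local_min (g m₁ m₂ : ℝ) (hg : 0 < g) (hm₁ : 0 < m₁) (hm₂ : 0 < m₂)
    (m : ℝ) (hm : m = m₁ + m₂ + g / 2)
    (θ α : ℝ → ℝ)
    (hθ : ∀ t, HasDerivAt θ (Real.sin (α t) * Real.sin (2 * θ t)) t)
    (hα : ∀ t, HasDerivAt α
      (-m * Real.sin (α t) * Real.sin (2 * θ t) +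
        2 * Real.cos (α t) * (m₁ * Real.cos (θ t) ^ 2 - m₂ * Real.sin (θ t) ^ 2)) t)
    (hrange : ∀ t, θ t ∈ Set.Ioo 0 (π / 2))
    (t₀ : ℝ) (hsin : Real.sin (α t₀) = 0)
    (hlt : θ t₀ < Real.arctan (Real.sqrt (m₁ / m₂)))
    (hnotfixed : (Real.sin (α t₀) * Real.sin (2 * θ t₀),
      -m * Real.sin (α t₀) * Real.sin (2 * θ t₀) +
        2 * Real.cos (α t₀) * (m₁ * Real.cos (θ t₀) ^ 2 - m₂ * Real.sin (θ t₀) ^ 2))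
      ≠ (0, 0)) :
    deriv θ t₀ = 0 ∧ 0 < deriv (deriv θ) t₀ :=
  theta_local_min_general m₁ m₂ hm₂ m θ α hθ hα hrange t₀ hsin hlt
end
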